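/- arXiv:1112.3187 — 4 statements merged into one kernel-verified Lean document; each statement's English description precedes it below -/
import Mathlib

section
/- Let $(\Omega,\mathcal{F},\mathbb{P})$ be a probability space, $\mathcal{G}$ a sub-$\sigma$-algebra, and $y$ a nonnegative integrable random variable. Then $\operatorname{ess\,sup}\,\mathbb{E}[y\mid\mathcal{G}] = \sup\{\mathbb{E}[y\,b] : b\in L_\infty(\mathcal{G}),\ b\ge 0,\ \mathbb{E}[b]\le 1\}$. -/
/-!
If `E[y | G] > t` on a `G`-set `A` of positive measure, the normalized indicator
`b = 1_A / P(A)` is admissible and `E[y b]` is the average of `E[y | G]` over `A`, hence `≥ t`.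
Conversely, `b` is `G`-measurable and bounded, so it can be pulled out of the conditional
expectation: `E[y b] = E[E[y | G] b] ≤ esssup E[y | G] · E[b]`.
-/

open MeasureTheory
open scoped ENNReal

section EssSup

variable {Ω β : Type*} {m0 : MeasurableSpace Ω} {μ : Measure Ω} [CompleteLinearOrder β]

lemma measure_lt_ne_zero_of_lt_essSup {f : Ω → β} {x : β} (hx : x < essSup f μ) :
    μ {ω | x < f ω} ≠ 0 := by
  intro h
  refine (essSup_le_of_ae_le x ?_).not_gt hx
  filter_upwards [measure_eq_zero_iff_ae_notMem.1 h] with ω hω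
  exact not_lt.1 hω

end EssSup

section Duality

variable {Ω : Type*} {m m0 : MeasurableSpace Ω} {μ : Measure Ω}

lemma le_setAverage_of_forall_le {A : Set Ω} (hA : MeasurableSet A) (hA0 : μ A ≠ 0)
    (hAfin : μ A ≠ ∞) {f : Ω → ℝ} (hf : IntegrableOn f A μ) {t : ℝ} (ht : ∀ ω ∈ A, t ≤ f ω) :
    t ≤ ⨍ ω in A, f ω ∂μ := by
  have hpos : 0 < μ.real A := ENNReal.toReal_pos hA0 hAfin
  rw [setAverage_eq, smul_eq_mul, le_inv_mul_iff₀ hpos, mul_comm]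
  exact setIntegral_ge_of_const_le_real hA hAfin ht hf

lemma ae_le_toReal_essSup_ofReal {g : Ω → ℝ}
    (hg : essSup (fun ω => ENNReal.ofReal (g ω)) μ ≠ ∞) :
    ∀ᵐ ω ∂μ, g ω ≤ (essSup (fun ω => ENNReal.ofReal (g ω)) μ).toReal := by
  filter_upwards [ENNReal.ae_le_essSup fun ω => ENNReal.ofReal (g ω)] with ω hω
  exact (ENNReal.ofReal_le_iff_le_toReal hg).1 hω

lemma integral_mul_le_of_ae_le {g b : Ω → ℝ} {M : ℝ} (hM : 0 ≤ M) (hg : ∀ᵐ ω ∂μ, g ω ≤ M)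
    (hgb : Integrable (fun ω => g ω * b ω) μ) (hb : Integrable b μ) (hb0 : ∀ᵐ ω ∂μ, 0 ≤ b ω)
    (hb1 : ∫ ω, b ω ∂μ ≤ 1) :
    ∫ ω, g ω * b ω ∂μ ≤ M :=
  calc ∫ ω, g ω * b ω ∂μ ≤ ∫ ω, M * b ω ∂μ :=
        integral_mono_ae hgb (hb.const_mul M) <| by
          filter_upwards [hg, hb0] with ω hω hω0 using mul_le_mul_of_nonneg_right hω hω0
    _ = M * ∫ ω, b ω ∂μ := integral_const_mul M _
    _ ≤ M := mul_le_of_le_one_right hM hb1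

lemma ofReal_integral_mul_le_essSup [IsFiniteMeasure μ] {g b : Ω → ℝ} (hg : Integrable g μ)
    (hbm : AEStronglyMeasurable b μ) (hb0 : ∀ᵐ ω ∂μ, 0 ≤ b ω) {C : ℝ} (hbC : ∀ᵐ ω ∂μ, ‖b ω‖ ≤ C)
    (hb1 : ∫ ω, b ω ∂μ ≤ 1) :
    ENNReal.ofReal (∫ ω, g ω * b ω ∂μ) ≤ essSup (fun ω => ENNReal.ofReal (g ω)) μ := by
  set M := essSup (fun ω => ENNReal.ofReal (g ω)) μ
  rcases eq_or_ne M ∞ with hM | hM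
  · exact hM ▸ le_top
  refine (ENNReal.ofReal_le_ofReal ?_).trans_eq (ENNReal.ofReal_toReal hM)
  exact integral_mul_le_of_ae_le ENNReal.toReal_nonneg (ae_le_toReal_essSup_ofReal hM)
    (hg.mul_bdd hbm hbC) ((integrable_const C).mono' hbm hbC) hb0 hb1

lemma integral_condExp_mul_of_bound [IsFiniteMeasure μ] (hm : m ≤ m0) {y b : Ω → ℝ}
    (hy : Integrable y μ) (hb : StronglyMeasurable[m] b) {C : ℝ} (hbC : ∀ᵐ ω ∂μ, ‖b ω‖ ≤ C) :
    ∫ ω, (μ[y|m]) ω * b ω ∂μ = ∫ ω, y ω * b ω ∂μ := by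
  simp_rw [mul_comm _ (b _)]
  exact (integral_congr_ae (condExp_stronglyMeasurable_mul_of_bound hm hb hy C hbC)).symm.trans
    (integral_condExp hm)

lemma setAverage_condExp [IsFiniteMeasure μ] (hm : m ≤ m0) {y : Ω → ℝ} (hy : Integrable y μ)
    {A : Set Ω} (hA : MeasurableSet[m] A) :
    ⨍ ω in A, (μ[y|m]) ω ∂μ = ⨍ ω in A, y ω ∂μ := by
  rw [setAverage_eq, setAverage_eq, setIntegral_condExp hm hy hA]

lemma exists_density_integral_mul_eq_setAverage [IsFiniteMeasure μ] (hm : m ≤ m0) {A : Set Ω}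
    (hA : MeasurableSet[m] A) (hA0 : μ A ≠ 0) (y : Ω → ℝ) :
    ∃ b : Ω → ℝ, Measurable[m] b ∧ (∀ ω, 0 ≤ b ω) ∧ (∃ C : ℝ, ∀ ω, b ω ≤ C) ∧
      ∫ ω, b ω ∂μ = 1 ∧ ∫ ω, y ω * b ω ∂μ = ⨍ ω in A, y ω ∂μ := by
  have hpos : 0 < μ.real A := ENNReal.toReal_pos hA0 (measure_ne_top μ A)
  refine ⟨A.indicator fun _ => (μ.real A)⁻¹, measurable_const.indicator hA,
    Set.indicator_nonneg fun _ _ => (inv_pos.2 hpos).le, ⟨_, Set.indicator_le_self' fun _ _ =>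
    (inv_pos.2 hpos).le⟩, ?_, ?_⟩
  · rw [integral_indicator_const _ (hm A hA), smul_eq_mul, mul_inv_cancel₀ hpos.ne']
  · simp_rw [← Set.indicator_mul_right A y]
    rw [integral_indicator (hm A hA), integral_mul_const, setAverage_eq, smul_eq_mul, mul_comm]

end Duality

theorem stmt5_general {Ω : Type*} {m0 : MeasurableSpace Ω} (μ : Measure Ω) [IsProbabilityMeasure μ]
    (m : MeasurableSpace Ω) (hm : m ≤ m0) (y : Ω → ℝ) (hy : Integrable y μ) :
    essSup (fun ω => ENNReal.ofReal ((μ[y|m]) ω)) μ =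
      sSup {r : ℝ≥0∞ | ∃ b : Ω → ℝ, Measurable[m] b ∧ (∀ ω, 0 ≤ b ω) ∧
        (∃ C : ℝ, ∀ ω, b ω ≤ C) ∧ (∫ ω, b ω ∂μ) ≤ 1 ∧
        r = ENNReal.ofReal (∫ ω, y ω * b ω ∂μ)} := by
  apply le_antisymm
  · refine le_of_forall_lt fun c hc => ?_
    obtain ⟨t, -, hct, htM⟩ := ENNReal.lt_iff_exists_real_btwn.1 hc
    set A := {ω | t < (μ[y|m]) ω}
    have hA : MeasurableSet[m] A :=
      measurableSet_lt measurable_const stronglyMeasurable_condExp.measurable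
    have hA0 : μ A ≠ 0 := fun h => measure_lt_ne_zero_of_lt_essSup htM <|
      measure_mono_null (fun ω hω => (ENNReal.ofReal_lt_ofReal_iff'.1 hω).1) h
    obtain ⟨b, hbm, hb0, hbC, hb1, hyb⟩ := exists_density_integral_mul_eq_setAverage hm hA hA0 y
    refine hct.trans_le (le_sSup_of_le ⟨b, hbm, hb0, hbC, hb1.le, rfl⟩ ?_)
    rw [hyb, ← setAverage_condExp hm hy hA]
    exact ENNReal.ofReal_le_ofReal <| le_setAverage_of_forall_le (hm A hA) hA0
      (measure_ne_top μ A) integrable_condExp.integrableOn fun _ hω => hω.le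
  · refine sSup_le ?_
    rintro _ ⟨b, hbm, hb0, ⟨C, hbC⟩, hb1, rfl⟩
    have hb_norm : ∀ᵐ ω ∂μ, ‖b ω‖ ≤ C := .of_forall fun ω => by
      rw [Real.norm_of_nonneg (hb0 ω)]; exact hbC ω
    rw [← integral_condExp_mul_of_bound hm hy hbm.stronglyMeasurable hb_norm]
    exact ofReal_integral_mul_le_essSup integrable_condExp
      (hbm.mono hm le_rfl).aestronglyMeasurable (.of_forall hb0) hb_norm hb1

/-- Duality: `esssup E[y | G] = sup { E[y b] : b ∈ L∞(G), b ≥ 0, E[b] ≤ 1 }` for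
nonnegative integrable `y` on a probability space. -/
theorem stmt5 {Ω : Type*} {m0 : MeasurableSpace Ω} (μ : Measure Ω) [IsProbabilityMeasure μ]
    (m : MeasurableSpace Ω) (hm : m ≤ m0) (y : Ω → ℝ) (hy : Integrable y μ)
    (hy0 : ∀ ω, 0 ≤ y ω) :
    essSup (fun ω => ENNReal.ofReal ((μ[y|m]) ω)) μ =
      sSup {r : ℝ≥0∞ | ∃ b : Ω → ℝ, Measurable[m] b ∧ (∀ ω, 0 ≤ b ω) ∧
        (∃ C : ℝ, ∀ ω, b ω ≤ C) ∧ (∫ ω, b ω ∂μ) ≤ 1 ∧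
        r = ENNReal.ofReal (∫ ω, y ω * b ω ∂μ)} :=
  stmt5_general μ m hm y hy
end

section
/- Let $(\Omega,\mathcal{F},\mathbb{P})$ be a probability space, $\mathcal{G}$ a sub-$\sigma$-algebra, $1\le p<\infty$, and $y$ an integrable random variable with $|y|^p$ integrable. Then $(\operatorname{ess\,sup}\,\mathbb{E}[|y|^p\mid\mathcal{G}])^{1/p} = \sup\{\|y\,b\|_p : b\in L_\infty(\mathcal{G}),\ \|b\|_p\le 1\}$. -/
open MeasureTheory
open scoped ENNReal

/-! Pulling the bounded `m`-measurable factor `|b|^p` out of the conditional expectation gives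
`E|y b|^p = E[|b|^p E[|y|^p | m]] ≤ ‖b‖_p^p · esssup E[|y|^p | m]`. Conversely, for `N` below that
essential supremum, the `m`-measurable set `A = {E[|y|^p | m] > N}` has positive measure, and the
normalized indicator `b = μ(A)^(-1/p) 1_A` has `‖b‖_p = 1` and `E|y b|^p ≥ N`. -/

lemma eLpNorm_ofReal_eq_lintegral_rpow {Ω : Type*} {m0 : MeasurableSpace Ω} (μ : Measure Ω)
    {p : ℝ} (hp : 0 < p) (u : Ω → ℝ) :
    eLpNorm u (ENNReal.ofReal p) μ = (∫⁻ ω, ENNReal.ofReal (|u ω| ^ p) ∂μ) ^ (1 / p) := by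
  rw [eLpNorm_eq_lintegral_rpow_enorm_toReal (by simpa using hp) ENNReal.ofReal_ne_top,
    ENNReal.toReal_ofReal hp.le]
  congr 1
  refine lintegral_congr fun ω => ?_
  rw [← ENNReal.ofReal_rpow_of_nonneg (abs_nonneg _) hp.le, ← Real.norm_eq_abs,
    ofReal_norm]

section CondExp

variable {Ω : Type*} {m m0 : MeasurableSpace Ω} {μ : Measure Ω} {f h : Ω → ℝ}

lemma lintegral_ofReal_mul_condExp [IsFiniteMeasure μ] (hm : m ≤ m0) (hf : Integrable f μ)
    (hf0 : 0 ≤ f) (hh : StronglyMeasurable[m] h) (hh0 : 0 ≤ h) {C : ℝ} (hhC : ∀ ω, h ω ≤ C) :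
    ∫⁻ ω, ENNReal.ofReal (h ω * f ω) ∂μ = ∫⁻ ω, ENNReal.ofReal (h ω * μ[f|m] ω) ∂μ := by
  have hh_bound : ∀ᵐ ω ∂μ, ‖h ω‖ ≤ C :=
    ae_of_all _ fun ω => by rw [Real.norm_eq_abs, abs_of_nonneg (hh0 ω)]; exact hhC ω
  have hh_aesm : AEStronglyMeasurable h μ := (hh.mono hm).aestronglyMeasurable
  have hhf : Integrable (h * f) μ := hf.bdd_mul hh_aesm hh_bound
  have hhg : Integrable (h * μ[f|m]) μ := integrable_condExp.bdd_mul hh_aesm hh_bound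
  have hg0 : 0 ≤ᵐ[μ] μ[f|m] := condExp_nonneg (ae_of_all _ hf0)
  have hint : ∫ ω, (h * f) ω ∂μ = ∫ ω, (h * μ[f|m]) ω ∂μ := by
    rw [← integral_condExp hm]
    exact integral_congr_ae (condExp_stronglyMeasurable_mul_of_bound hm hh hf C hh_bound)
  calc ∫⁻ ω, ENNReal.ofReal (h ω * f ω) ∂μ = ENNReal.ofReal (∫ ω, (h * f) ω ∂μ) :=
        (ofReal_integral_eq_lintegral_ofReal hhf
          (ae_of_all _ fun ω => mul_nonneg (hh0 ω) (hf0 ω))).symm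
    _ = ENNReal.ofReal (∫ ω, (h * μ[f|m]) ω ∂μ) := by rw [hint]
    _ = ∫⁻ ω, ENNReal.ofReal (h ω * μ[f|m] ω) ∂μ :=
        ofReal_integral_eq_lintegral_ofReal hhg (hg0.mono fun ω hω => mul_nonneg (hh0 ω) hω)

lemma lintegral_ofReal_mul_le_mul_essSup_condExp [IsFiniteMeasure μ] (hm : m ≤ m0)
    (hf : Integrable f μ) (hf0 : 0 ≤ f) (hh : StronglyMeasurable[m] h) (hh0 : 0 ≤ h) {C : ℝ}
    (hhC : ∀ ω, h ω ≤ C) :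
    ∫⁻ ω, ENNReal.ofReal (h ω * f ω) ∂μ ≤
      (∫⁻ ω, ENNReal.ofReal (h ω) ∂μ) * essSup (fun ω => ENNReal.ofReal (μ[f|m] ω)) μ := by
  rw [lintegral_ofReal_mul_condExp hm hf hf0 hh hh0 hhC,
    ← lintegral_mul_const _ ((hh.mono hm).measurable.ennreal_ofReal)]
  refine lintegral_mono_ae ?_
  filter_upwards [ENNReal.ae_le_essSup fun ω => ENNReal.ofReal (μ[f|m] ω)] with ω hω
  rw [ENNReal.ofReal_mul (hh0 ω)]
  exact mul_le_mul_right hω _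

lemma exists_mul_measure_le_setLIntegral_of_lt_essSup_condExp [IsFiniteMeasure μ] (hm : m ≤ m0)
    (hf : Integrable f μ) (hf0 : 0 ≤ f) {N : ℝ≥0∞}
    (hN : N < essSup (fun ω => ENNReal.ofReal (μ[f|m] ω)) μ) :
    ∃ A, MeasurableSet[m] A ∧ μ A ≠ 0 ∧ N * μ A ≤ ∫⁻ ω in A, ENNReal.ofReal (f ω) ∂μ := by
  set A := {ω | N < ENNReal.ofReal (μ[f|m] ω)}
  have hA : MeasurableSet[m] A :=
    stronglyMeasurable_condExp.measurable.ennreal_ofReal measurableSet_Ioi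
  refine ⟨A, hA, fun hA0 => hN.not_ge (essSup_le_of_ae_le N ?_), ?_⟩
  · exact measure_eq_zero_iff_ae_notMem.mp hA0 |>.mono fun ω hω => not_lt.mp hω
  have hfg : ∫⁻ ω in A, ENNReal.ofReal (f ω) ∂μ = ∫⁻ ω in A, ENNReal.ofReal (μ[f|m] ω) ∂μ := by
    rw [← ofReal_integral_eq_lintegral_ofReal hf.restrict (ae_of_all _ fun ω => hf0 ω),
      ← ofReal_integral_eq_lintegral_ofReal integrable_condExp.restrict
        (ae_restrict_of_ae (condExp_nonneg (ae_of_all _ hf0))),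
      setIntegral_condExp hm hf hA]
  rw [hfg, ← setLIntegral_const]
  refine lintegral_mono_ae ?_
  filter_upwards [ae_restrict_mem (hm _ hA)] with ω hω
  exact le_of_lt hω

end CondExp

section Duality

variable {Ω : Type*} {m m0 : MeasurableSpace Ω} {μ : Measure Ω} [IsFiniteMeasure μ] {p : ℝ}
  {y b : Ω → ℝ}

lemma abs_mul_rpow_comm (x z : ℝ) : |x * z| ^ p = |z| ^ p * |x| ^ p := by
  rw [abs_mul, Real.mul_rpow (abs_nonneg _) (abs_nonneg _), mul_comm]

lemma eLpNorm_mul_le_essSup_condExp_rpow (hm : m ≤ m0) (hp : 0 < p)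
    (hyp : Integrable (fun ω => |y ω| ^ p) μ) (hb : Measurable[m] b) {C : ℝ}
    (hbC : ∀ ω, |b ω| ≤ C) (hb1 : eLpNorm b (ENNReal.ofReal p) μ ≤ 1) :
    eLpNorm (fun ω => y ω * b ω) (ENNReal.ofReal p) μ ≤
      essSup (fun ω => ENNReal.ofReal (μ[fun ω' => |y ω'| ^ p|m] ω)) μ ^ (1 / p) := by
  rw [eLpNorm_ofReal_eq_lintegral_rpow μ hp] at hb1 ⊢
  have hb1' : ∫⁻ ω, ENNReal.ofReal (|b ω| ^ p) ∂μ ≤ 1 := by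
    rwa [one_div, ENNReal.rpow_inv_le_iff hp, ENNReal.one_rpow] at hb1
  refine ENNReal.rpow_le_rpow ?_ (by positivity)
  simp_rw [abs_mul_rpow_comm]
  have hbp : StronglyMeasurable[m] fun ω => |b ω| ^ p :=
    ((Real.continuous_rpow_const hp.le).measurable.comp (measurable_abs.comp hb)).stronglyMeasurable
  refine (lintegral_ofReal_mul_le_mul_essSup_condExp hm hyp
    (fun ω => Real.rpow_nonneg (abs_nonneg _) p) hbp
    (fun ω => Real.rpow_nonneg (abs_nonneg _) p)
    (fun ω => Real.rpow_le_rpow (abs_nonneg _) (hbC ω) hp.le)).trans ?_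
  exact (mul_le_mul_left hb1' _).trans (one_mul _).le

lemma exists_le_eLpNorm_mul_of_lt_essSup_condExp_rpow (hm : m ≤ m0) (hp : 0 < p)
    (hyp : Integrable (fun ω => |y ω| ^ p) μ) {M : ℝ≥0∞}
    (hM : M < essSup (fun ω => ENNReal.ofReal (μ[fun ω' => |y ω'| ^ p|m] ω)) μ ^ (1 / p)) :
    ∃ b : Ω → ℝ, Measurable[m] b ∧ (∃ C : ℝ, ∀ ω, |b ω| ≤ C) ∧
      eLpNorm b (ENNReal.ofReal p) μ ≤ 1 ∧
      M ≤ eLpNorm (fun ω => y ω * b ω) (ENNReal.ofReal p) μ := by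
  rw [one_div, ENNReal.lt_rpow_inv_iff hp] at hM
  obtain ⟨A, hA, hA0, hMA⟩ := exists_mul_measure_le_setLIntegral_of_lt_essSup_condExp hm hyp
    (fun ω => Real.rpow_nonneg (abs_nonneg _) p) hM
  set c : ℝ := ((μ A)⁻¹).toReal ^ p⁻¹
  have hc : 0 ≤ c := by positivity
  have hbp : ∀ ω, ENNReal.ofReal (|A.indicator (fun _ => c) ω| ^ p) =
      A.indicator (fun _ => (μ A)⁻¹) ω := by
    intro ω
    by_cases hω : ω ∈ A
    · rw [Set.indicator_of_mem hω, Set.indicator_of_mem hω, abs_of_nonneg hc,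
        Real.rpow_inv_rpow ENNReal.toReal_nonneg hp.ne',
        ENNReal.ofReal_toReal (ENNReal.inv_ne_top.mpr hA0)]
    · simp [hω, Real.zero_rpow hp.ne']
  refine ⟨A.indicator fun _ => c, measurable_const.indicator hA, ⟨c, fun ω => ?_⟩, ?_, ?_⟩
  · by_cases hω : ω ∈ A <;> simp [hω, abs_of_nonneg hc, hc]
  · rw [eLpNorm_ofReal_eq_lintegral_rpow μ hp, lintegral_congr hbp, lintegral_indicator (hm _ hA),
      setLIntegral_const, ENNReal.inv_mul_cancel hA0 (measure_ne_top μ A), ENNReal.one_rpow]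
  rw [eLpNorm_ofReal_eq_lintegral_rpow μ hp, one_div, ENNReal.le_rpow_inv_iff hp]
  calc M ^ p = (μ A)⁻¹ * (M ^ p * μ A) := by
        rw [mul_comm (M ^ p), ← mul_assoc, ENNReal.inv_mul_cancel hA0 (measure_ne_top μ A),
          one_mul]
    _ ≤ (μ A)⁻¹ * ∫⁻ ω in A, ENNReal.ofReal (|y ω| ^ p) ∂μ := by gcongr
    _ = ∫⁻ ω, ENNReal.ofReal (|y ω * A.indicator (fun _ => c) ω| ^ p) ∂μ := by
        rw [← lintegral_const_mul' _ _ (ENNReal.inv_ne_top.mpr hA0),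
          ← lintegral_indicator (hm _ hA)]
        refine lintegral_congr fun ω => ?_
        rw [abs_mul_rpow_comm, ENNReal.ofReal_mul (by positivity), hbp]
        by_cases hω : ω ∈ A <;> simp [hω]

end Duality

theorem stmt6_general {Ω : Type*} {m0 : MeasurableSpace Ω} (μ : Measure Ω) [IsProbabilityMeasure μ]
    (m : MeasurableSpace Ω) (hm : m ≤ m0) (p : ℝ) (hp : 1 ≤ p) (y : Ω → ℝ)
    (hyp : Integrable (fun ω => abs (y ω) ^ p) μ) :
    (essSup (fun ω => ENNReal.ofReal ((μ[fun ω' => abs (y ω') ^ p|m]) ω)) μ) ^ (1 / p) =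
      sSup {r : ℝ≥0∞ | ∃ b : Ω → ℝ, Measurable[m] b ∧ (∃ C : ℝ, ∀ ω, |b ω| ≤ C) ∧
        eLpNorm b (ENNReal.ofReal p) μ ≤ 1 ∧
        r = eLpNorm (fun ω => y ω * b ω) (ENNReal.ofReal p) μ} := by
  have hp0 : 0 < p := one_pos.trans_le hp
  refine le_antisymm (le_of_forall_lt_imp_le_of_dense fun M hM => ?_) (sSup_le ?_)
  · obtain ⟨b, hb, hbC, hb1, hMb⟩ := exists_le_eLpNorm_mul_of_lt_essSup_condExp_rpow hm hp0 hyp hM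
    exact hMb.trans (le_sSup ⟨b, hb, hbC, hb1, rfl⟩)
  · rintro r ⟨b, hb, ⟨C, hbC⟩, hb1, rfl⟩
    exact eLpNorm_mul_le_essSup_condExp_rpow hm hp0 hyp hb hbC hb1

/-- `(esssup E[|y|^p | G])^(1/p) = sup { ‖y b‖_p : b ∈ L∞(G), ‖b‖_p ≤ 1 }`. -/
theorem stmt6 {Ω : Type*} {m0 : MeasurableSpace Ω} (μ : Measure Ω) [IsProbabilityMeasure μ]
    (m : MeasurableSpace Ω) (hm : m ≤ m0) (p : ℝ) (hp : 1 ≤ p) (y : Ω → ℝ)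
    (hy : Integrable y μ) (hyp : Integrable (fun ω => abs (y ω) ^ p) μ) :
    (essSup (fun ω => ENNReal.ofReal ((μ[fun ω' => abs (y ω') ^ p|m]) ω)) μ) ^ (1 / p) =
      sSup {r : ℝ≥0∞ | ∃ b : Ω → ℝ, Measurable[m] b ∧ (∃ C : ℝ, ∀ ω, |b ω| ≤ C) ∧
        eLpNorm b (ENNReal.ofReal p) μ ≤ 1 ∧
        r = eLpNorm (fun ω => y ω * b ω) (ENNReal.ofReal p) μ} :=
  stmt6_general μ m hm p hp y hyp
end

section
/- Let $(\Omega,\mathcal{F},\mathbb{P})$ be a probability space, $\mathcal{G}$ a sub-$\sigma$-algebra, $1\le p<\infty$, and $y$ with $|y|^p$ integrable. Then $(\operatorname{ess\,sup}\,\mathbb{E}[|y|^p\mid\mathcal{G}])^{1/p} = \sup\{\mathbb{P}(E)^{-1/p}\|y\,\mathbf{1}_E\|_p : E\in\mathcal{G},\ \mathbb{P}(E)>0\}$. -/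
/-!
Replace `E[|y|^p | G]` by the Lebesgue conditional expectation `F = μ⁻[|y|^p | G]`; its integral
over `E ∈ G` is `‖y 1_E‖_p^p`, so the right-hand side is the supremum of the `1/p`-th powers of
the averages of `F` over sets `E ∈ G` of positive measure. For a `G`-measurable `F` these averages
exhaust `ess sup F`: if `b < ess sup F`, then `{b < F}` lies in `G`, has positive measure, and `F`
averages at least `b` over it.
-/

open MeasureTheory
open scoped ENNReal

theorem essSup_eq_sSup_setLAverage {Ω : Type*} {m m0 : MeasurableSpace Ω} (hm : m ≤ m0)
    (μ : Measure Ω) [IsFiniteMeasure μ] {f : Ω → ℝ≥0∞} (hf : Measurable[m] f) :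
    essSup f μ =
      sSup {r | ∃ E : Set Ω, MeasurableSet[m] E ∧ 0 < μ E ∧ r = ⨍⁻ x in E, f x ∂μ} := by
  refine le_antisymm (le_of_forall_lt_imp_le_of_dense fun b hb => ?_)
    (sSup_le fun _ ⟨E, _, _, hr⟩ => hr ▸ setLAverage_le_essSup E f)
  set E := {x | b < f x}
  have hEm : MeasurableSet[m] E := measurableSet_lt measurable_const hf
  have hEpos : 0 < μ E := by
    refine pos_iff_ne_zero.2 fun h0 => hb.not_ge (essSup_le_of_ae_le b ?_)
    filter_upwards [measure_eq_zero_iff_ae_notMem.1 h0] with x hx using not_lt.1 hx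
  refine le_sSup_of_le ⟨E, hEm, hEpos, rfl⟩ ?_
  calc b = ⨍⁻ _ in E, b ∂μ := (setLAverage_const hEpos.ne' (measure_ne_top μ E) b).symm
    _ ≤ ⨍⁻ x in E, f x ∂μ :=
      laverage_mono_ae ((ae_restrict_iff' (hm E hEm)).2 (ae_of_all _ fun _ hx => le_of_lt hx))

theorem eLpNorm_indicator_eq_setLIntegral_rpow {α ε : Type*} {m0 : MeasurableSpace α}
    {μ : Measure α} [TopologicalSpace ε] [ESeminormedAddMonoid ε] {p : ℝ} (hp : 0 < p)
    {E : Set α} (hE : MeasurableSet E) (y : α → ε) :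
    eLpNorm (E.indicator y) (ENNReal.ofReal p) μ =
      (∫⁻ x in E, ‖y x‖ₑ ^ p ∂μ) ^ (1 / p) := by
  rw [eLpNorm_indicator_eq_eLpNorm_restrict hE,
    eLpNorm_eq_lintegral_rpow_enorm_toReal (by simpa using hp) ENNReal.ofReal_ne_top,
    ENNReal.toReal_ofReal hp.le]

theorem ENNReal.sSup_rpow {s : Set ℝ≥0∞} {z : ℝ} (hz : 0 < z) :
    sSup s ^ z = sSup ((· ^ z) '' s) := by
  rw [sSup_image]; exact (ENNReal.orderIsoRpow z hz).map_sSup s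

/-- `(esssup E[|y|^p | G])^(1/p) = sup { P(E)^(-1/p) ‖y 1_E‖_p : E ∈ G, P(E) > 0 }`. -/
theorem stmt7 {Ω : Type*} {m0 : MeasurableSpace Ω} (μ : Measure Ω) [IsProbabilityMeasure μ]
    (m : MeasurableSpace Ω) (hm : m ≤ m0) (p : ℝ) (hp : 1 ≤ p) (y : Ω → ℝ)
    (hyp : Integrable (fun ω => abs (y ω) ^ p) μ) :
    (essSup (fun ω => ENNReal.ofReal ((μ[fun ω' => abs (y ω') ^ p|m]) ω)) μ) ^ (1 / p) =
      sSup {r : ℝ≥0∞ | ∃ E : Set Ω, MeasurableSet[m] E ∧ 0 < μ E ∧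
        r = (μ E) ^ (-(1 / p)) * eLpNorm (E.indicator y) (ENNReal.ofReal p) μ} := by
  have hp0 : 0 < p := zero_lt_one.trans_le hp
  have henorm : (fun ω => ‖y ω‖ₑ ^ p) = fun ω => ENNReal.ofReal (|y ω| ^ p) :=
    funext fun ω => by
      rw [Real.enorm_eq_ofReal_abs, ENNReal.ofReal_rpow_of_nonneg (abs_nonneg _) hp0.le]
  set F := μ⁻[fun ω => ENNReal.ofReal (|y ω| ^ p)|m]
  have hF : (fun ω => ENNReal.ofReal ((μ[fun ω' => |y ω'| ^ p|m]) ω)) =ᵐ[μ] F :=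
    (condLExp_ofReal m hyp (ae_of_all _ fun _ => by positivity)).symm
  have hnorm : ∀ E, MeasurableSet[m] E →
      μ E ^ (-(1 / p)) * eLpNorm (E.indicator y) (ENNReal.ofReal p) μ =
        (⨍⁻ x in E, F x ∂μ) ^ (1 / p) := by
    intro E hE
    rw [eLpNorm_indicator_eq_setLIntegral_rpow hp0 (hm E hE), henorm,
      ← setLIntegral_condLExp hm μ _ hE, setLAverage_eq,
      ENNReal.div_rpow_of_nonneg _ _ (by positivity), ENNReal.rpow_neg, ENNReal.div_eq_inv_mul]
  rw [essSup_congr_ae hF, essSup_eq_sSup_setLAverage hm μ (measurable_condLExp m μ _),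
    ENNReal.sSup_rpow (by positivity)]
  congr 1
  ext r
  constructor
  · rintro ⟨_, ⟨E, hE, hEpos, rfl⟩, rfl⟩
    exact ⟨E, hE, hEpos, (hnorm E hE).symm⟩
  · rintro ⟨E, hE, hEpos, rfl⟩
    exact ⟨_, ⟨E, hE, hEpos, rfl⟩, (hnorm E hE).symm⟩
end

section
/- Let $r_1,\dots,r_n$ be the Rademacher functions on $[0,1]$ (or independent $\pm1$ symmetric random variables) and $e_{1k}$ the matrix units in $M_n$ with normalized trace $\mathrm{tr}_n=\frac{1}{n}\mathrm{Tr}$. Set $x=\sum_{k=1}^n r_k\otimes e_{1k}\in L_\infty([0,1])\otimes M_n$. Then for every $0<p<\infty$, $\left(\int_0^1 \mathrm{tr}_n\,|x(t)|^p\,dt\right)^{1/p} = (n)^{1/2}\,n^{-1/p}$, where $|x|=(x^*x)^{1/2}$. In particular, for the martingale with respect to the dyadic filtration tensored with $M_n$ and $m=0$, $\|x-x_0\|_p=n^{1/2-1/p}$, which is unbounded in $n$ for $p>2$. -/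
open MeasureTheory Matrix

/-! `x*x` is the rank-one matrix `r rᵀ` with `‖r‖² = n`, so `(x*x)² = n • x*x`: its eigenvalues lie
in `{0, n}` and sum to its trace `n`. Hence `tr_n |x(ω)|^p = n^(p/2) / n` for every `ω`. -/

lemma Matrix.conjTranspose_mul_self_sum_smul_single {m n α : Type*} [Fintype m] [Fintype n]
    [DecidableEq m] [DecidableEq n] [Semiring α] [StarRing α] (i₀ : m) (c : n → α) :
    (∑ k, c k • single i₀ k (1 : α))ᴴ * ∑ k, c k • single i₀ k (1 : α) =
      vecMulVec (star c) c := by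
  ext k l
  simp [mul_apply, Matrix.sum_apply, single_apply, ite_and, vecMulVec_apply]

lemma Matrix.dotProduct_self_eq_card_of_mul_self_eq_one {n α : Type*} [Fintype n]
    [NonAssocSemiring α] {c : n → α} (hc : ∀ k, c k * c k = 1) : c ⬝ᵥ c = Fintype.card n := by
  simp [dotProduct, hc]

namespace Matrix.IsHermitian

variable {𝕜 n : Type*} [RCLike 𝕜] [Fintype n] [DecidableEq n] {A : Matrix n n 𝕜}

lemma eigenvalues_eq_zero_or_eq_of_mul_self_eq_smul (hA : A.IsHermitian) {c : ℝ}
    (hAA : A * A = (c : 𝕜) • A) (i : n) : hA.eigenvalues i = 0 ∨ hA.eigenvalues i = c := by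
  set v := ⇑(hA.eigenvectorBasis i)
  set μ := hA.eigenvalues i
  have hv : A *ᵥ v = μ • v := hA.mulVec_eigenvectorBasis i
  have hv0 : v ≠ 0 := fun h0 =>
    hA.eigenvectorBasis.orthonormal.ne_zero i ((WithLp.ofLp_eq_zero 2).mp h0)
  have hsq : (μ * μ) • v = (c * μ) • v := calc
    (μ * μ) • v = A *ᵥ (A *ᵥ v) := by rw [hv, mulVec_smul, hv, smul_smul]
    _ = (c * μ) • v := by
      rw [mulVec_mulVec, hAA, smul_mulVec, hv, mul_smul,
        RCLike.real_smul_eq_coe_smul (K := 𝕜) c]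
  have hμ : μ * (μ - c) = 0 := by
    linear_combination smul_left_injective ℝ hv0 hsq
  rcases mul_eq_zero.mp hμ with h | h
  · exact .inl h
  · exact .inr (sub_eq_zero.mp h)

lemma sum_eigenvalues_rpow_of_mul_self_eq_smul (hA : A.IsHermitian) {c : ℝ}
    (hAA : A * A = (c : 𝕜) • A) {q : ℝ} (hq : q ≠ 0) :
    ∑ i, hA.eigenvalues i ^ q = RCLike.re A.trace * c ^ (q - 1) := by
  have hterm : ∀ i, hA.eigenvalues i ^ q = hA.eigenvalues i * c ^ (q - 1) := by
    intro i
    rcases hA.eigenvalues_eq_zero_or_eq_of_mul_self_eq_smul hAA i with h | h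
    · rw [h, Real.zero_rpow hq, zero_mul]
    · rcases eq_or_ne c 0 with hc | hc
      · rw [h, hc, Real.zero_rpow hq, zero_mul]
      · rw [h, Real.rpow_sub_one hc, mul_div_cancel₀ _ hc]
  rw [Finset.sum_congr rfl fun i _ => hterm i, ← Finset.sum_mul, hA.trace_eq_sum_eigenvalues]
  simp

lemma sum_eigenvalues_rpow_of_eq_vecMulVec_self (hA : A.IsHermitian) {c : n → 𝕜}
    (hAc : A = vecMulVec c c) (hc : ∀ k, c k * c k = 1) {q : ℝ} (hq : q ≠ 0) :
    ∑ i, hA.eigenvalues i ^ q = Fintype.card n * (Fintype.card n : ℝ) ^ (q - 1) := by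
  have hdot : c ⬝ᵥ c = Fintype.card n := dotProduct_self_eq_card_of_mul_self_eq_one hc
  have hsq : A * A = ((Fintype.card n : ℝ) : 𝕜) • A := by
    rw [hAc, vecMulVec_mul_vecMulVec, hdot, vecMulVec_smul, RCLike.ofReal_natCast]
  rw [hA.sum_eigenvalues_rpow_of_mul_self_eq_smul hsq hq, hAc, trace_vecMulVec, hdot,
    RCLike.natCast_re]

end Matrix.IsHermitian

theorem stmt9_general (n : ℕ) (hn : 0 < n) {Ω : Type*} {mΩ : MeasurableSpace Ω} (μ : Measure Ω)
    [IsProbabilityMeasure μ] (r : Fin n → Ω → ℝ)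
    (hr : ∀ k ω, r k ω = 1 ∨ r k ω = -1) (p : ℝ) (hp : 0 < p)
    (x : Ω → Matrix (Fin n) (Fin n) ℂ)
    (hx : ∀ ω, x ω = ∑ k, (r k ω : ℂ) • Matrix.single (⟨0, hn⟩ : Fin n) k (1 : ℂ))
    (h : ∀ ω, ((x ω)ᴴ * x ω).IsHermitian) :
    (∫ ω, (∑ i, ((h ω).eigenvalues i) ^ (p / 2)) / n ∂μ) ^ (1 / p) =
      (n : ℝ) ^ ((1 : ℝ) / 2) * (n : ℝ) ^ (-(1 / p)) := by
  have hn' : (0 : ℝ) < n := by positivity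
  have hnormalizedTrace : ∀ ω, (∑ i, ((h ω).eigenvalues i) ^ (p / 2)) / n = (n : ℝ) ^ (p / 2 - 1) := by
    intro ω
    set c : Fin n → ℂ := fun k => (r k ω : ℂ)
    have hc : ∀ k, c k * c k = 1 := fun k => by rcases hr k ω with h1 | h1 <;> simp [c, h1]
    have hgram : (x ω)ᴴ * x ω = vecMulVec c c := by
      rw [hx, conjTranspose_mul_self_sum_smul_single]
      congr 1
      ext k
      simp [c]
    rw [(h ω).sum_eigenvalues_rpow_of_eq_vecMulVec_self hgram hc (by positivity),
      Fintype.card_fin, mul_div_cancel_left₀ _ hn'.ne']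
  simp only [hnormalizedTrace, integral_const, probReal_univ, one_smul]
  rw [← Real.rpow_mul hn'.le, ← Real.rpow_add hn']
  congr 1
  field_simp
  ring

/-- For `x = ∑ r_k ⊗ e_{1k}` with `r_k` ±1-valued (Rademacher) functions,
`(∫ tr_n |x(t)|^p dt)^(1/p) = n^(1/2) n^(-1/p)`, where
`tr_n |x|^p = (1/n) ∑ eigenvalues(x*x)^(p/2)`. -/
theorem stmt9 (n : ℕ) (hn : 0 < n) {Ω : Type*} {mΩ : MeasurableSpace Ω} (μ : Measure Ω)
    [IsProbabilityMeasure μ] (r : Fin n → Ω → ℝ) (hmeas : ∀ k, Measurable (r k))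
    (hr : ∀ k ω, r k ω = 1 ∨ r k ω = -1) (p : ℝ) (hp : 0 < p)
    (x : Ω → Matrix (Fin n) (Fin n) ℂ)
    (hx : ∀ ω, x ω = ∑ k, (r k ω : ℂ) • Matrix.single (⟨0, hn⟩ : Fin n) k (1 : ℂ))
    (h : ∀ ω, ((x ω)ᴴ * x ω).IsHermitian) :
    (∫ ω, (∑ i, ((h ω).eigenvalues i) ^ (p / 2)) / n ∂μ) ^ (1 / p) =
      (n : ℝ) ^ ((1 : ℝ) / 2) * (n : ℝ) ^ (-(1 / p)) :=
  stmt9_general n hn (mΩ := mΩ) μ r hr p hp x hx h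
end
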